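/- arXiv:0911.0069 — 4 statements merged into one kernel-verified Lean document; each statement's English description precedes it below -/
import Mathlib

section
/- Let k be a field, R a commutative ring that is an integral domain and a finitely generated k-algebra, I a proper ideal of R, and R̂ the I-adic completion of R with canonical map j : R → R̂. If P is a prime ideal of R with I ⊆ P, then the extension P·R̂ (the ideal of R̂ generated by j(P)) is a prime ideal of R̂. -/
/-!
Since `I` is finitely generated, the kernel of `R̂ → R ⧸ I` is `I·R̂`. For `I ≤ P` this kernel
lies in `P·R̂`, so `P·R̂` is the full preimage of its image `P ⧸ I`, which is prime in `R ⧸ I`.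
-/

namespace AdicCompletion

variable {R : Type*} [CommRing R] {I : Ideal R}

theorem map_algebraMap_eq_comap_evalOneₐ (hI : I.FG) {P : Ideal R} (hIP : I ≤ P) :
    P.map (algebraMap R (AdicCompletion I R)) =
      (P.map (Ideal.Quotient.mk I)).comap (evalOneₐ I).toRingHom := by
  rw [← evalOneₐ_comp_algebraMap_eq_mk, ← Ideal.map_map,
    Ideal.comap_map_of_surjective' (evalOneₐ I).toRingHom (evalOneₐ_surjective I),
    ker_evalOneₐ_eq_map I hI]
  exact (sup_eq_left.mpr (Ideal.map_mono hIP)).symm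

theorem isPrime_map_algebraMap (hI : I.FG) {P : Ideal R} [P.IsPrime] (hIP : I ≤ P) :
    (P.map (algebraMap R (AdicCompletion I R))).IsPrime := by
  have : (P.map (Ideal.Quotient.mk I)).IsPrime :=
    Ideal.map_isPrime_of_surjective Ideal.Quotient.mk_surjective (by rwa [Ideal.mk_ker])
  rw [map_algebraMap_eq_comap_evalOneₐ hI hIP]
  exact Ideal.comap_isPrime _ _

end AdicCompletion

theorem map_prime_adicCompletion_isPrime_general
    (k R : Type*) [Field k] [CommRing R] [Algebra k R]
    [Algebra.FiniteType k R] (I : Ideal R)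
    (P : Ideal R) (hP : P.IsPrime) (hIP : I ≤ P) :
    (Ideal.map (algebraMap R (AdicCompletion I R)) P).IsPrime := by
  have : IsNoetherianRing R := Algebra.FiniteType.isNoetherianRing k R
  exact AdicCompletion.isPrime_map_algebraMap (IsNoetherian.noetherian I) hIP

/-- Let `k` be a field, `R` an integral domain which is a finitely generated `k`-algebra,
`I` a proper ideal of `R`, and `R̂` the `I`-adic completion of `R` with canonical map
`j : R → R̂`.  If `P` is a prime ideal of `R` containing `I`, then the extension `P·R̂`
is a prime ideal of `R̂`. -/
theorem map_prime_adicCompletion_isPrime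
    (k R : Type*) [Field k] [CommRing R] [IsDomain R] [Algebra k R]
    [Algebra.FiniteType k R] (I : Ideal R) (hI : I ≠ ⊤)
    (P : Ideal R) (hP : P.IsPrime) (hIP : I ≤ P) :
    (Ideal.map (algebraMap R (AdicCompletion I R)) P).IsPrime :=
  map_prime_adicCompletion_isPrime_general k R I P hP hIP
end

section
/- Let R be a commutative ℂ-algebra equipped with a Poisson bracket {·,·}, let I be an ideal of R, and let R̂ be the I-adic completion of R with canonical map j : R → R̂. Then there exists a Poisson bracket ⟨·,·⟩ on R̂, i.e., a ℂ-bilinear map R̂ × R̂ → R̂ that is antisymmetric, satisfies the Jacobi identity, and is a derivation in each argument, such that ⟨j(a), j(b)⟩ = j({a, b}) for all a, b ∈ R. -/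
/-- A Poisson bracket on a commutative ring `A` whose `ℂ`-algebra structure is given by a
ring homomorphism `φ : ℂ →+* A`: a `ℂ`-bilinear map (bilinearity expressed via additivity
and compatibility with multiplication by scalars `φ c`, which in a `ℂ`-algebra is exactly
the scalar action) which is antisymmetric, satisfies the Jacobi identity and is a
derivation in each argument. -/
def IsPoissonBracket {A : Type*} [CommRing A] (φ : ℂ →+* A) (pb : A → A → A) : Prop :=
  (∀ a a' b : A, pb (a + a') b = pb a b + pb a' b) ∧
  (∀ a b b' : A, pb a (b + b') = pb a b + pb a b') ∧
  (∀ (c : ℂ) (a b : A), pb (φ c * a) b = φ c * pb a b) ∧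
  (∀ (c : ℂ) (a b : A), pb a (φ c * b) = φ c * pb a b) ∧
  (∀ a b : A, pb a b = - pb b a) ∧
  (∀ a b c : A, pb a (pb b c) + pb b (pb c a) + pb c (pb a b) = 0) ∧
  (∀ a b c : A, pb a (b * c) = b * pb a c + c * pb a b)

namespace PoissonAux

variable {R : Type*} [CommRing R] {I : Ideal R} {pb : R → R → R}
variable (h1 : ∀ a a' b : R, pb (a + a') b = pb a b + pb a' b)
variable (hanti : ∀ a b : R, pb a b = - pb b a)
variable (hleib : ∀ a b c : R, pb a (b * c) = b * pb a c + c * pb a b)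

include hanti hleib in
lemma leib_left (a b c : R) : pb (b * c) a = b * pb c a + c * pb b a := by
  rw [hanti, hleib, hanti c a, hanti b a]; ring

include h1 hanti hleib in
lemma pb_mem_pow : ∀ (n : ℕ) (x : R), x ∈ I ^ (n + 1) → ∀ b, pb x b ∈ I ^ n := by
  intro n
  induction n with
  | zero => intro x _ b; simp [Ideal.one_eq_top]
  | succ n ih =>
    intro x hx b
    rw [pow_succ] at hx
    refine Submodule.mul_induction_on hx ?_ ?_
    · intro m hm i hi
      rw [leib_left hanti hleib b m i]
      refine Ideal.add_mem _ ?_ ?_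
      · exact Ideal.mul_mem_right _ _ hm
      · have h := Ideal.mul_mem_mul hi (ih m hm b)
        rwa [← pow_succ'] at h
    · intro x y hx hy
      rw [h1]
      exact Ideal.add_mem _ hx hy

include h1 hanti hleib in
lemma key {n : ℕ} {a a' b b' : R} (ha : a - a' ∈ I ^ (n + 1)) (hb : b - b' ∈ I ^ (n + 1)) :
    pb a b - pb a' b' ∈ I ^ n := by
  have e1 : pb a b = pb (a - a') b + pb a' b := by
    rw [← h1, sub_add_cancel]
  have e2 : pb a' b = pb a' b' - pb (b - b') a' := by
    have h := h1 (b - b') b' a'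
    rw [sub_add_cancel] at h
    rw [hanti a' b, h, hanti a' b']; ring
  have : pb a b - pb a' b' = pb (a - a') b - pb (b - b') a' := by
    rw [e1, e2]; ring
  rw [this]
  exact Ideal.sub_mem _ (pb_mem_pow h1 hanti hleib n _ ha b)
    (pb_mem_pow h1 hanti hleib n _ hb a')

include h1 hanti hleib in
lemma key_mk {n : ℕ} {a a' b b' : R}
    (ha : (Submodule.Quotient.mk a : R ⧸ (I ^ (n + 1) • ⊤ : Ideal R)) = Submodule.Quotient.mk a')
    (hb : (Submodule.Quotient.mk b : R ⧸ (I ^ (n + 1) • ⊤ : Ideal R)) = Submodule.Quotient.mk b') :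
    (Submodule.Quotient.mk (pb a b) : R ⧸ (I ^ n • ⊤ : Ideal R))
      = Submodule.Quotient.mk (pb a' b') := by
  have hI : ∀ m : ℕ, (I ^ m • ⊤ : Ideal R) = I ^ m := fun m => by
    rw [smul_eq_mul, Ideal.mul_top]
  rw [Submodule.Quotient.eq] at ha hb ⊢
  rw [hI] at ha hb ⊢
  exact key h1 hanti hleib ha hb

end PoissonAux

/-- Let `R` be a commutative `ℂ`-algebra with a Poisson bracket `{·,·}` and `I` an ideal
of `R`.  Then the `I`-adic completion `R̂` of `R` carries a Poisson bracket `⟨·,·⟩`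
satisfying `⟨j a, j b⟩ = j {a, b}` for all `a b : R`, where `j : R → R̂` is the canonical
map. -/
theorem exists_poissonBracket_adicCompletion
    (R : Type*) [CommRing R] [Algebra ℂ R] (pb : R → R → R)
    (hpb : IsPoissonBracket (algebraMap ℂ R) pb)
    (I : Ideal R) :
    ∃ pb' : AdicCompletion I R → AdicCompletion I R → AdicCompletion I R,
      IsPoissonBracket
        ((algebraMap R (AdicCompletion I R)).comp (algebraMap ℂ R)) pb' ∧
      ∀ a b : R,
        pb' (algebraMap R (AdicCompletion I R) a) (algebraMap R (AdicCompletion I R) b) =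
          algebraMap R (AdicCompletion I R) (pb a b) := by
  obtain ⟨h1, h2, hs1, hs2, hanti, hjac, hleib⟩ := hpb
  -- representative picking
  set rep : ∀ n : ℕ, (R ⧸ (I ^ n • ⊤ : Ideal R)) → R := fun n x => Quotient.out x with hrep
  have hrep_spec : ∀ (n : ℕ) (x : R ⧸ (I ^ n • ⊤ : Ideal R)),
      (Submodule.Quotient.mk (rep n x) : R ⧸ (I ^ n • ⊤ : Ideal R)) = x :=
    fun n x => Quotient.out_eq x
  have mkmul : ∀ (m : ℕ) (x y : R),
      (Submodule.Quotient.mk (x * y) : R ⧸ (I ^ m • ⊤ : Ideal R))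
        = Submodule.Quotient.mk x * Submodule.Quotient.mk y := fun _ _ _ => rfl
  have hmk : ∀ (f : AdicCompletion I R) (k l : ℕ) (hkl : k ≤ l),
      (Submodule.Quotient.mk (rep l (f.val l)) : R ⧸ (I ^ k • ⊤ : Ideal R)) = f.val k := by
    intro f k l hkl
    calc (Submodule.Quotient.mk (rep l (f.val l)) : R ⧸ (I ^ k • ⊤ : Ideal R))
        = AdicCompletion.transitionMap I R hkl (Submodule.Quotient.mk (rep l (f.val l))) := rfl
      _ = AdicCompletion.transitionMap I R hkl (f.val l) := by rw [hrep_spec]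
      _ = f.val k := f.property hkl
  -- the bracket
  have compat : ∀ (f g : AdicCompletion I R) {m n : ℕ} (hmn : m ≤ n),
      AdicCompletion.transitionMap I R hmn
        ((fun k => (Submodule.Quotient.mk
            (pb (rep (k+1) (f.val (k+1))) (rep (k+1) (g.val (k+1))))
              : R ⧸ (I ^ k • ⊤ : Ideal R))) n)
      = (fun k => (Submodule.Quotient.mk
            (pb (rep (k+1) (f.val (k+1))) (rep (k+1) (g.val (k+1))))
              : R ⧸ (I ^ k • ⊤ : Ideal R))) m := by
    intro f g m n hmn
    show (Submodule.Quotient.mk (pb (rep (n+1) (f.val (n+1))) (rep (n+1) (g.val (n+1))))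
        : R ⧸ (I ^ m • ⊤ : Ideal R)) = _
    refine PoissonAux.key_mk h1 hanti hleib ?_ ?_
    · rw [hmk f (m+1) (n+1) (by omega), hmk f (m+1) (m+1) le_rfl]
    · rw [hmk g (m+1) (n+1) (by omega), hmk g (m+1) (m+1) le_rfl]
  set pb' : AdicCompletion I R → AdicCompletion I R → AdicCompletion I R :=
    fun f g => ⟨fun k => Submodule.Quotient.mk
        (pb (rep (k+1) (f.val (k+1))) (rep (k+1) (g.val (k+1)))),
      fun {m n} hmn => compat f g hmn⟩ with hpb'
  have hval : ∀ (f g : AdicCompletion I R) (n : ℕ),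
      (pb' f g).val n = Submodule.Quotient.mk
        (pb (rep (n+1) (f.val (n+1))) (rep (n+1) (g.val (n+1)))) := fun _ _ _ => rfl
  have hval' : ∀ (f g : AdicCompletion I R) (n : ℕ) (a b : R),
      (Submodule.Quotient.mk a : R ⧸ (I ^ (n+1) • ⊤ : Ideal R)) = f.val (n+1) →
      (Submodule.Quotient.mk b : R ⧸ (I ^ (n+1) • ⊤ : Ideal R)) = g.val (n+1) →
      (pb' f g).val n = Submodule.Quotient.mk (pb a b) := by
    intro f g n a b ha hb
    rw [hval]
    refine PoissonAux.key_mk h1 hanti hleib ?_ ?_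
    · rw [hrep_spec, ha]
    · rw [hrep_spec, hb]
  refine ⟨pb', ⟨?_, ?_, ?_, ?_, ?_, ?_, ?_⟩, ?_⟩
  · -- additivity in first arg
    intro f f' g
    ext n
    rw [hval' (f + f') g n (rep (n+1) (f.val (n+1)) + rep (n+1) (f'.val (n+1)))
        (rep (n+1) (g.val (n+1))) (by rw [Submodule.Quotient.mk_add, hrep_spec, hrep_spec]; rfl)
        (hrep_spec _ _)]
    rw [h1, Submodule.Quotient.mk_add]
    rfl
  · -- additivity in second arg
    intro f g g'
    ext n
    rw [hval' f (g + g') n (rep (n+1) (f.val (n+1)))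
        (rep (n+1) (g.val (n+1)) + rep (n+1) (g'.val (n+1))) (hrep_spec _ _)
        (by rw [Submodule.Quotient.mk_add, hrep_spec, hrep_spec]; rfl)]
    rw [h2, Submodule.Quotient.mk_add]
    rfl
  · -- scalar in first arg
    intro c f g
    ext n
    rw [hval' _ g n (algebraMap ℂ R c * rep (n+1) (f.val (n+1))) (rep (n+1) (g.val (n+1)))
        ?_ (hrep_spec _ _)]
    · rw [hs1]
      rfl
    · show Submodule.Quotient.mk _ = Submodule.Quotient.mk (algebraMap ℂ R c)
        * f.val (n+1)
      rw [mkmul, hrep_spec]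
  · -- scalar in second arg
    intro c f g
    ext n
    rw [hval' f _ n (rep (n+1) (f.val (n+1))) (algebraMap ℂ R c * rep (n+1) (g.val (n+1)))
        (hrep_spec _ _) ?_]
    · rw [hs2]
      rfl
    · show Submodule.Quotient.mk _ = Submodule.Quotient.mk (algebraMap ℂ R c)
        * g.val (n+1)
      rw [mkmul, hrep_spec]
  · -- antisymmetry
    intro f g
    ext n
    rw [hval, hanti, Submodule.Quotient.mk_neg]
    rfl
  · -- Jacobi
    intro f g h
    ext n
    have e1 : (pb' f (pb' g h)).val n
        = Submodule.Quotient.mk (pb (rep (n+2) (f.val (n+2)))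
            (pb (rep (n+2) (g.val (n+2))) (rep (n+2) (h.val (n+2))))) :=
      hval' _ _ n _ _ (hmk f (n+1) (n+2) (by omega)) (hval g h (n+1)).symm
    have e2 : (pb' g (pb' h f)).val n
        = Submodule.Quotient.mk (pb (rep (n+2) (g.val (n+2)))
            (pb (rep (n+2) (h.val (n+2))) (rep (n+2) (f.val (n+2))))) :=
      hval' _ _ n _ _ (hmk g (n+1) (n+2) (by omega)) (hval h f (n+1)).symm
    have e3 : (pb' h (pb' f g)).val n
        = Submodule.Quotient.mk (pb (rep (n+2) (h.val (n+2)))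
            (pb (rep (n+2) (f.val (n+2))) (rep (n+2) (g.val (n+2))))) :=
      hval' _ _ n _ _ (hmk h (n+1) (n+2) (by omega)) (hval f g (n+1)).symm
    show (pb' f (pb' g h)).val n + (pb' g (pb' h f)).val n + (pb' h (pb' f g)).val n = 0
    rw [e1, e2, e3, ← Submodule.Quotient.mk_add, ← Submodule.Quotient.mk_add, hjac]
    rfl
  · -- Leibniz
    intro f g h
    ext n
    have e0 : (pb' f (g * h)).val n
        = Submodule.Quotient.mk (pb (rep (n+1) (f.val (n+1)))
            (rep (n+1) (g.val (n+1)) * rep (n+1) (h.val (n+1)))) := by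
      refine hval' _ _ n _ _ (hrep_spec _ _) ?_
      show Submodule.Quotient.mk _ = g.val (n+1) * h.val (n+1)
      rw [mkmul, hrep_spec, hrep_spec]
    show (pb' f (g * h)).val n = (g * pb' f h + h * pb' f g).val n
    rw [e0, hleib]
    show Submodule.Quotient.mk _ = g.val n * (pb' f h).val n + h.val n * (pb' f g).val n
    rw [hval, hval, ← hmk g n (n+1) (by omega), ← hmk h n (n+1) (by omega)]
    rw [Submodule.Quotient.mk_add]
    rfl
  · -- compatibility with j
    intro a b
    ext n
    rw [hval' _ _ n a b rfl rfl]
    rfl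
end

section
/- Let Z be a commutative ring and A an associative unital Z-algebra that is finitely generated as a Z-module, such that the structure map Z → A is injective and its image equals the center of A. Let Z' be a commutative Z-algebra that is flat as a Z-module. Then the center of the Z'-algebra A ⊗_Z Z' equals the image of Z', i.e., Z(A ⊗_Z Z') = { 1 ⊗ z' : z' ∈ Z' }. -/
open scoped TensorProduct

/-- Let `Z` be a commutative ring and `A` an associative unital `Z`-algebra, finitely
generated as a `Z`-module, whose structure map `Z → A` is injective with image the
center of `A`.  If `Z'` is a flat commutative `Z`-algebra, then the center of
`A ⊗[Z] Z'` is exactly `{ 1 ⊗ z' : z' ∈ Z' }`. -/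
theorem center_baseChange_flat
    (Z A Z' : Type*) [CommRing Z] [Ring A] [Algebra Z A] [Module.Finite Z A]
    (hinj : Function.Injective (algebraMap Z A))
    (hcenter : Set.range (algebraMap Z A) = Set.center A)
    [CommRing Z'] [Algebra Z Z'] [Module.Flat Z Z'] :
    Set.center (A ⊗[Z] Z') = Set.range (fun z' : Z' => (1 : A) ⊗ₜ[Z] z') := by
  classical
  -- commutator maps
  set g : A → (A →ₗ[Z] A) := fun a => LinearMap.mulLeft Z a - LinearMap.mulRight Z a with hg
  -- base-changed commutator
  have hgr : ∀ (c : A) (y : A ⊗[Z] Z'),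
      (g c).rTensor Z' y = (c ⊗ₜ[Z] (1 : Z')) * y - y * (c ⊗ₜ[Z] (1 : Z')) := by
    intro c y
    induction y using TensorProduct.induction_on with
    | zero => simp
    | tmul b w =>
        simp only [hg, LinearMap.rTensor_tmul, LinearMap.sub_apply,
          LinearMap.mulLeft_apply, LinearMap.mulRight_apply,
          Algebra.TensorProduct.tmul_mul_tmul, one_mul, mul_one,
          TensorProduct.sub_tmul]
    | add y₁ y₂ h₁ h₂ =>
        rw [map_add, h₁, h₂, mul_add, add_mul]
        abel
  -- finite generating set
  obtain ⟨s, hs⟩ := Module.Finite.fg_top (R := Z) (M := A)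
  set f : A →ₗ[Z] (s → A) := LinearMap.pi (fun i => g i.1) with hf
  -- kernel of f is the image of Z
  have hker : LinearMap.ker f = LinearMap.range (Algebra.linearMap Z A) := by
    ext b
    constructor
    · intro hb
      have hb' : ∀ i : s, (i : A) * b = b * (i : A) := by
        intro i
        have := congrFun (LinearMap.mem_ker.mp hb) i
        simpa [hf, hg, sub_eq_zero] using this
      have hcen : b ∈ Set.center A := by
        rw [Semigroup.mem_center_iff]
        intro c
        have hc : c ∈ (⊤ : Submodule Z A) := Submodule.mem_top
        rw [← hs] at hc
        induction hc using Submodule.span_induction with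
        | mem x hx => exact hb' ⟨x, hx⟩
        | zero => simp
        | add x y _ _ hx hy => rw [add_mul, mul_add, hx, hy]
        | smul z x _ hx => rw [smul_mul_assoc, mul_smul_comm, hx]
      rw [← hcenter] at hcen
      obtain ⟨z, hz⟩ := hcen
      exact ⟨z, hz⟩
    · rintro ⟨z, rfl⟩
      rw [LinearMap.mem_ker]
      ext i
      have : algebraMap Z A z ∈ Set.center A := hcenter ▸ Set.mem_range_self z
      have hcomm := (Semigroup.mem_center_iff.mp this) (i : A)
      simp [hf, hg, sub_eq_zero, Algebra.linearMap_apply, hcomm]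
  -- exactness after base change
  have hex : Function.Exact (Algebra.linearMap Z A) f :=
    LinearMap.exact_iff.mpr hker
  have hexT : Function.Exact ((Algebra.linearMap Z A).rTensor Z') (f.rTensor Z') :=
    Module.Flat.rTensor_exact Z' hex
  -- the comparison map (s → A) ⊗ Z' ≃ (s → A ⊗ Z')
  let e : (↥s → A) ⊗[Z] Z' ≃ₗ[Z] (↥s → A ⊗[Z] Z') :=
    (TensorProduct.comm Z _ Z').trans <|
      (TensorProduct.piRight Z Z Z' (fun _ : s => A)).trans <|
      LinearEquiv.piCongrRight (fun _ : s => TensorProduct.comm Z Z' A)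
  have he : ∀ (y : (↥s → A) ⊗[Z] Z') (i : s),
      e y i = (LinearMap.proj i).rTensor Z' y := by
    intro y i
    induction y using TensorProduct.induction_on with
    | zero => rw [e.map_zero, LinearMap.map_zero]; rfl
    | tmul v w => simp [e]
    | add y₁ y₂ h₁ h₂ => simp [map_add, h₁, h₂]
  ext x
  simp only [Set.mem_range]
  constructor
  · intro hx
    -- x commutes with everything
    have hxc : ∀ c : A ⊗[Z] Z', c * x = x * c := Semigroup.mem_center_iff.mp hx
    have h0 : f.rTensor Z' x = 0 := by
      have : e (f.rTensor Z' x) = 0 := by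
        funext i
        rw [he]
        simp only [Pi.zero_apply]
        have : (LinearMap.proj i ∘ₗ f).rTensor Z' x = 0 := by
          have hproj : (LinearMap.proj i ∘ₗ f : A →ₗ[Z] A) = g i.1 := by
            ext b; simp [hf]
          rw [hproj, hgr, hxc, sub_self]
        rw [← this, LinearMap.rTensor_comp, LinearMap.comp_apply]
      have h2 := congrArg e.symm this
      rwa [e.symm_apply_apply, e.symm.map_zero] at h2
    obtain ⟨t, ht⟩ := (hexT x).mp h0
    refine ⟨TensorProduct.lid Z Z' t, ?_⟩
    have : t = (1 : Z) ⊗ₜ[Z] (TensorProduct.lid Z Z' t) := by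
      rw [← TensorProduct.lid_symm_apply]
      exact ((TensorProduct.lid Z Z').symm_apply_apply t).symm
    rw [this] at ht
    rw [← ht, LinearMap.rTensor_tmul]
    simp
  · rintro ⟨z', rfl⟩
    rw [Semigroup.mem_center_iff]
    intro c
    induction c using TensorProduct.induction_on with
    | zero => simp
    | tmul b w =>
        simp [Algebra.TensorProduct.tmul_mul_tmul, mul_comm]
    | add c₁ c₂ h₁ h₂ => rw [add_mul, mul_add, h₁, h₂]
end

section
/- Let A be an associative unital ℂ-algebra that is a prime ring, meaning that for all a, b ∈ A, if a·x·b = 0 for every x ∈ A then a = 0 or b = 0. Let Z denote the center of A, and assume that A is finitely generated as a Z-module and that Z is an integral domain which is integrally closed in its field of fractions. Then the inclusion Z ↪ A splits as a map of Z-modules: there exists a Z-linear map π : A → Z with π(z) = z for all z ∈ Z; in particular Z is a direct summand of A as a Z-module. -/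
/-!
Let `K` be the fraction field of `Z`. The reduced trace `a ↦ tr_K (1 ⊗ a)` on `K ⊗_Z A` is
`Z`-linear and equals `n • z` on `z ∈ Z`, where `n = dim_K (K ⊗_Z A) > 0`. Its values are sums
of eigenvalues of endomorphisms killed by monic polynomials over `Z`, so they are integral over
`Z` and therefore lie in `Z`. Since `ℂ ⊆ Z`, `n` is invertible in `Z`, and `n⁻¹ •` the reduced
trace is the required retraction.
-/

open Polynomial
open scoped TensorProduct

theorem IsIntegral.of_mem_spectrum {R K B : Type*} [CommRing R] [Field K] [Ring B]
    [Algebra R K] [Algebra K B] [Algebra R B] [IsScalarTower R K B] {a : B}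
    (ha : IsIntegral R a) {μ : K} (hμ : μ ∈ spectrum K a) : IsIntegral R μ := by
  obtain ⟨p, hp, hpa⟩ := ha
  refine ⟨p, hp, ?_⟩
  have h := spectrum.subset_polynomial_aeval a (p.map (algebraMap R K)) ⟨μ, hμ, rfl⟩
  rw [aeval_map_algebraMap, aeval_def, hpa] at h
  rw [← eval_map]
  by_contra hne
  exact spectrum.mem_iff.mp h (by rw [sub_zero]; exact (IsUnit.mk0 _ hne).map _)

theorem Matrix.isIntegral_trace {R K n : Type*} [CommRing R] [Field K] [Algebra R K]
    [Fintype n] [DecidableEq n] {M : Matrix n n K} (hM : IsIntegral R M) :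
    IsIntegral R M.trace := by
  let L := AlgebraicClosure K
  rw [← isIntegral_algebraMap_iff (algebraMap K L).injective, AddMonoidHom.map_trace,
    trace_eq_sum_roots_charpoly]
  refine IsIntegral.multiset_sum fun μ hμ ↦ ?_
  exact (hM.map (AlgHom.mapMatrix (IsScalarTower.toAlgHom R K L))).of_mem_spectrum
    (mem_spectrum_iff_isRoot_charpoly.mpr (isRoot_of_mem_roots hμ))

theorem LinearMap.isIntegral_trace {R K V : Type*} [CommRing R] [Field K] [Algebra R K]
    [AddCommGroup V] [Module K V] [Module R V] [IsScalarTower R K V] [FiniteDimensional K V]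
    {f : Module.End K V} (hf : IsIntegral R f) : IsIntegral R (LinearMap.trace K V f) := by
  classical
  let b := Module.finBasis K V
  rw [trace_eq_matrix_trace K b]
  exact Matrix.isIntegral_trace (hf.map ((LinearMap.toMatrixAlgEquiv b).restrictScalars R))

namespace Algebra

variable (R K A : Type*) [CommRing R] [Field K] [Algebra R K] [Ring A] [Algebra R A]

noncomputable def baseChangeTrace : A →ₗ[R] K :=
  ((LinearMap.trace K (K ⊗[R] A) ∘ₗ LinearMap.mul K (K ⊗[R] A)).restrictScalars R) ∘ₗ
    TensorProduct.includeRight.toLinearMap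

variable {R K A}

theorem baseChangeTrace_apply (a : A) :
    baseChangeTrace R K A a = LinearMap.trace K _ (LinearMap.mul K (K ⊗[R] A) (1 ⊗ₜ a)) :=
  rfl

theorem isIntegral_baseChangeTrace [Module.Finite R A] (a : A) :
    IsIntegral R (baseChangeTrace R K A a) := by
  have hmul : IsIntegral R (LinearMap.mul K (K ⊗[R] A) (1 ⊗ₜ a)) :=
    (Algebra.IsIntegral.isIntegral (R := R) a).map
      (((Algebra.lmul K (K ⊗[R] A)).restrictScalars R).comp TensorProduct.includeRight)
  exact LinearMap.isIntegral_trace hmul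

theorem baseChangeTrace_algebraMap [Module.Finite R A] (r : R) :
    baseChangeTrace R K A (algebraMap R A r) =
      Module.finrank K (K ⊗[R] A) • algebraMap R K r := by
  have hmul : LinearMap.mul K (K ⊗[R] A) (1 ⊗ₜ algebraMap R A r) =
      algebraMap R K r • LinearMap.id := by
    ext x
    simp [← TensorProduct.algebraMap_apply', IsScalarTower.algebraMap_apply R K (K ⊗[R] A),
      Algebra.smul_def]
  rw [baseChangeTrace_apply, hmul, map_smul, LinearMap.trace_id, smul_eq_mul, nsmul_eq_mul,
    mul_comm]

theorem finrank_baseChange_pos [Module.Finite R A] [Module.Flat R K]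
    (h : Function.Injective (algebraMap R A)) : 0 < Module.finrank K (K ⊗[R] A) :=
  have := TensorProduct.nontrivial_of_algebraMap_injective_of_flat_left R K A h
  Module.finrank_pos

end Algebra

open Algebra in
theorem exists_linearMap_algebraMap_eq_nsmul {R A : Type*} [CommRing R] [IsDomain R]
    [IsIntegrallyClosed R] [Ring A] [Algebra R A] [Module.Finite R A]
    (h : Function.Injective (algebraMap R A)) :
    ∃ n ≠ 0, ∃ τ : A →ₗ[R] R, ∀ r, τ (algebraMap R A r) = n • r := by
  let K := FractionRing R
  have hK : Function.Injective (Algebra.linearMap R K) := IsFractionRing.injective R K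
  have hτ (a : A) : baseChangeTrace R K A a ∈ LinearMap.range (Algebra.linearMap R K) :=
    IsIntegrallyClosed.isIntegral_iff.mp (isIntegral_baseChangeTrace a)
  refine ⟨_, (finrank_baseChange_pos (K := K) h).ne', .codRestrictOfInjective _ _ hK hτ,
    fun r ↦ hK ?_⟩
  rw [LinearMap.codRestrictOfInjective_comp_apply, baseChangeTrace_algebraMap, map_nsmul]
  rfl

theorem Subring.isUnit_natCast_center {K A : Type*} [Field K] [CharZero K] [Ring A]
    [Algebra K A] {n : ℕ} (hn : n ≠ 0) : IsUnit (n : Subring.center A) := by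
  have h : IsUnit (n : Subalgebra.center K A) := by
    rw [← map_natCast (algebraMap K _)]
    exact (IsUnit.mk0 _ (Nat.cast_ne_zero.mpr hn)).map _
  -- `Subalgebra.center K A` and `Subring.center A` are the same subtype of `A`.
  exact h

theorem center_is_direct_summand_of_prime_integrally_closed_general
    (A : Type*) [Ring A] [Algebra ℂ A]
    [Module.Finite (Subring.center A) A]
    [IsDomain (Subring.center A)]
    [IsIntegrallyClosed (Subring.center A)] :
    ∃ π : A →ₗ[Subring.center A] Subring.center A,
      ∀ z : Subring.center A, π (z : A) = z := by
  obtain ⟨n, hn, τ, hτ⟩ :=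
    exists_linearMap_algebraMap_eq_nsmul (R := Subring.center A) (A := A) Subtype.val_injective
  obtain ⟨u, hu⟩ := Subring.isUnit_natCast_center (K := ℂ) (A := A) hn
  refine ⟨(↑u⁻¹ : Subring.center A) • τ, fun z ↦ ?_⟩
  change (↑u⁻¹ : Subring.center A) * τ (algebraMap _ A z) = z
  rw [hτ, nsmul_eq_mul, ← hu, Units.inv_mul_cancel_left]

/-- Let `A` be an associative unital `ℂ`-algebra which is a prime ring, with center `Z`,
such that `A` is a finite `Z`-module and `Z` is an integrally closed domain.  Then the
inclusion `Z ↪ A` splits as a map of `Z`-modules: there is a `Z`-linear map `π : A → Z`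
with `π z = z` for all `z ∈ Z`; in particular `Z` is a direct summand of `A`. -/
theorem center_is_direct_summand_of_prime_integrally_closed
    (A : Type*) [Ring A] [Algebra ℂ A]
    (hprime : ∀ a b : A, (∀ x : A, a * x * b = 0) → a = 0 ∨ b = 0)
    [Module.Finite (Subring.center A) A]
    [IsDomain (Subring.center A)]
    [IsIntegrallyClosed (Subring.center A)] :
    ∃ π : A →ₗ[Subring.center A] Subring.center A,
      ∀ z : Subring.center A, π (z : A) = z :=
  center_is_direct_summand_of_prime_integrally_closed_general A
end
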